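/- Let a_1, ..., a_r be distinct integers such that for every prime p the residues a_1 mod p, ..., a_r mod p do not cover all of Z/pZ, i.e., ν(p; a) < p for every prime p, where ν(p; a) = #{a_1 mod p, ..., a_r mod p}. Then the infinite product C(a) = ∏_p (1 - ν(p;a)/p)/(1 - 1/p)^r, taken over all primes p, converges to a strictly positive real number. -/

import Mathlib

/-!
Once `p` exceeds every difference `|a i - a j|`, the residues are distinct, so the factor at `p`
is `(1 - r/p) / (1 - 1/p) ^ r`; its logarithm is `log (1 - r/p) - r log (1 - 1/p)`, in which
the first-order terms `-r/p` and `r/p` cancel, leaving `O(1/p²)`. The logarithms of the factors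
are therefore summable, every factor is positive because `ν(p;a) < p`, and the partial products
converge to the exponential of the sum of the logarithms.
-/

open Filter Finset Real

lemma abs_log_one_sub_add_le {x : ℝ} (hx : |x| ≤ 1 / 2) : |log (1 - x) + x| ≤ 2 * x ^ 2 := by
  have h := abs_log_sub_add_sum_range_le (lt_of_le_of_lt hx (by norm_num)) 1
  simp only [range_one, sum_singleton, pow_one, Nat.cast_zero, zero_add, div_one,
    Nat.reduceAdd] at h
  rw [add_comm]
  refine h.trans ?_
  rw [div_le_iff₀ (by linarith), ← sq_abs x]
  nlinarith [sq_nonneg |x|]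

lemma abs_log_one_sub_mul_div_one_sub_pow_le {r : ℕ} {x : ℝ} (hx₀ : 0 ≤ x) (hx : x ≤ 1 / 2)
    (hrx : r * x ≤ 1 / 2) :
    |log ((1 - r * x) / (1 - x) ^ r)| ≤ 2 * (r ^ 2 + r) * x ^ 2 := by
  have hr : (0 : ℝ) ≤ r := r.cast_nonneg
  rw [log_div (by linarith) (pow_ne_zero _ (by linarith)), log_pow]
  have h₁ := abs_log_one_sub_add_le (x := r * x) (by rw [abs_of_nonneg (by positivity)]; exact hrx)
  have h₂ := abs_log_one_sub_add_le (x := x) (by rw [abs_of_nonneg hx₀]; exact hx)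
  calc |log (1 - r * x) - r * log (1 - x)|
      = |(log (1 - r * x) + r * x) - r * (log (1 - x) + x)| := by ring_nf
    _ ≤ |log (1 - r * x) + r * x| + r * |log (1 - x) + x| :=
        (abs_sub _ _).trans_eq (by rw [abs_mul, abs_of_nonneg hr])
    _ ≤ 2 * (r * x) ^ 2 + r * (2 * x ^ 2) := by gcongr
    _ = 2 * (r ^ 2 + r) * x ^ 2 := by ring

section SingularSeries

variable {ι : Type*} [Fintype ι] (a : ι → ℤ)

/-- The number `ν(n;a)` of residue classes modulo `n` met by the `a i`. -/
def residueCount (n : ℕ) : ℕ := (univ.image fun i => (a i : ZMod n)).card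

noncomputable def singularFactor (p : ℕ) : ℝ :=
  (1 - residueCount a p / (p : ℝ)) / (1 - 1 / (p : ℝ)) ^ Fintype.card ι

variable {a}

lemma residueCount_eq_card (ha : Function.Injective a) {n : ℕ}
    (hn : ∀ i j, |a i - a j| < n) : residueCount a n = Fintype.card ι := by
  refine card_image_of_injective _ fun i j hij => ha ?_
  rw [ZMod.intCast_eq_intCast_iff_dvd_sub] at hij
  have := Int.eq_zero_of_abs_lt_dvd hij (by simpa [abs_sub_comm] using hn i j)
  linarith

lemma eventually_residueCount_eq_card (ha : Function.Injective a) :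
    ∀ᶠ n in atTop, residueCount a n = Fintype.card ι := by
  have : ∀ᶠ n : ℕ in atTop, ∀ i j, |a i - a j| < n :=
    eventually_all.2 fun i => eventually_all.2 fun j =>
      (tendsto_natCast_atTop_atTop (R := ℤ)).eventually_gt_atTop _
  filter_upwards [this] with n hn using residueCount_eq_card ha hn

lemma singularFactor_pos {p : ℕ} (hp : 1 < p) (hν : residueCount a p < p) :
    0 < singularFactor a p := by
  have hp' : (1 : ℝ) < p := by exact_mod_cast hp
  have hν' : (residueCount a p : ℝ) < p := by exact_mod_cast hν
  have hnum : 0 < 1 - residueCount a p / (p : ℝ) := by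
    rw [sub_pos, div_lt_one (by linarith)]; exact hν'
  have hden : 0 < 1 - 1 / (p : ℝ) := by
    rw [sub_pos, div_lt_one (by linarith)]; exact hp'
  exact div_pos hnum (pow_pos hden _)

lemma summable_log_singularFactor (ha : Function.Injective a) :
    Summable fun n => log (singularFactor a n) := by
  set r := Fintype.card ι
  have hs : Summable fun n : ℕ => 2 * (r ^ 2 + r) * (1 / (n : ℝ)) ^ 2 := by
    simpa [one_div] using (summable_one_div_nat_pow.2 one_lt_two).mul_left (2 * (r ^ 2 + r) : ℝ)
  refine hs.of_norm_bounded_eventually_nat ?_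
  filter_upwards [eventually_residueCount_eq_card ha, eventually_ge_atTop (2 * r + 2)]
    with n hν hn
  have hn' : 2 * (r : ℝ) + 2 ≤ n := by exact_mod_cast hn
  have hn₀ : (0 : ℝ) < n := by linarith
  have h := abs_log_one_sub_mul_div_one_sub_pow_le (r := r) (x := 1 / n) (by positivity)
    (by rw [div_le_div_iff₀ hn₀ two_pos]; linarith)
    (by rw [mul_one_div, div_le_div_iff₀ hn₀ two_pos]; linarith)
  rw [mul_one_div] at h
  rwa [norm_eq_abs, singularFactor, hν]

end SingularSeries

/-- For an `r`-tuple `a` of distinct integers such that the residues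
`a 1 mod p, …, a r mod p` never cover all of `ℤ/pℤ`, the Hardy–Littlewood singular
series `C(a) = ∏_p (1 - ν(p;a)/p) / (1 - 1/p)^r` converges to a strictly positive
real number, where `ν(p;a)` is the number of distinct residues of the `a i` mod `p`. -/
theorem singular_series_converges_and_positive (r : ℕ) (a : Fin r → ℤ)
    (ha : Function.Injective a)
    (hcov : ∀ p : ℕ, p.Prime →
      (Finset.univ.image fun i => ((a i : ZMod p))).card < p) :
    ∃ L : ℝ, 0 < L ∧
      Tendsto (fun N : ℕ => ∏ p ∈ (Finset.range (N + 1)).filter Nat.Prime,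
          (1 - ((Finset.univ.image fun i => ((a i : ZMod p))).card : ℝ) / (p : ℝ)) /
            (1 - 1 / (p : ℝ)) ^ r)
        atTop (nhds L) := by
  set g : ℕ → ℝ := fun n => if n.Prime then singularFactor a n else 1
  have hg_pos : ∀ n, 0 < g n := fun n => by
    by_cases hn : n.Prime
    · simpa [g, hn] using singularFactor_pos hn.one_lt (hcov n hn)
    · simp [g, hn]
  have hg_log : Summable fun n => log (g n) :=
    ((summable_log_singularFactor ha).indicator {p | p.Prime}).congr fun n => by
      by_cases hn : n.Prime <;> simp [g, hn]
  refine ⟨rexp (∑' n, log (g n)), exp_pos _, ?_⟩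
  have := (hasProd_of_hasSum_log hg_pos hg_log.hasSum).tendsto_prod_nat.comp
    (tendsto_add_atTop_nat 1)
  refine this.congr fun N => ?_
  simp only [Function.comp_apply, prod_filter, g, singularFactor, residueCount, Fintype.card_fin]
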